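/- A burl-rooted tree with k reticulation vertices is a tree-based network: the subgraph obtained by deleting the k reticulation arcs (a_i, b_i) is a spanning tree whose leaves are exactly the leaves of the network. -/

import Mathlib

/-- A directed graph on vertex set `V` is given by a finite set of arcs `A ⊆ V × V`;
`Adj A u v` means there is an arc from `u` to `v`. -/
def Adj {V : Type} (A : Finset (V × V)) (u v : V) : Prop := (u, v) ∈ A

/-- In-degree of a vertex. -/
def inDeg {V : Type} [DecidableEq V] (A : Finset (V × V)) (v : V) : ℕ :=
  (A.filter (fun e => e.2 = v)).card

/-- Out-degree of a vertex. -/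
def outDeg {V : Type} [DecidableEq V] (A : Finset (V × V)) (v : V) : ℕ :=
  (A.filter (fun e => e.1 = v)).card

/-- A leaf is a vertex of in-degree 1 and out-degree 0. -/
def IsLeaf {V : Type} [DecidableEq V] (A : Finset (V × V)) (v : V) : Prop :=
  inDeg A v = 1 ∧ outDeg A v = 0

/-- A directed graph is acyclic if it has no directed cycle,
i.e. no vertex has a nontrivial directed path to itself. -/
def Acyclic {V : Type} (A : Finset (V × V)) : Prop :=
  ∀ v : V, ¬ Relation.TransGen (Adj A) v v

/-- A binary rooted phylogenetic network: a finite directed acyclic simple graph whose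
vertices are the root (in-degree 0, out-degree 1 or 2), leaves (in-degree 1, out-degree 0),
tree vertices (in-degree 1, out-degree 2) and reticulation vertices
(in-degree 2, out-degree 1). -/
structure IsPhyloNetwork {V : Type} [Fintype V] [DecidableEq V]
    (A : Finset (V × V)) (root : V) : Prop where
  acyclic : Acyclic A
  root_in : inDeg A root = 0
  root_out : outDeg A root = 1 ∨ outDeg A root = 2
  vertex_types : ∀ v : V, v ≠ root →
    (inDeg A v = 1 ∧ outDeg A v = 0) ∨
    (inDeg A v = 1 ∧ outDeg A v = 2) ∨
    (inDeg A v = 2 ∧ outDeg A v = 1)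

/-- The undirected simple graph underlying a set of arcs. -/
def toSimpleGraph {V : Type} (T : Finset (V × V)) : SimpleGraph V where
  Adj a b := a ≠ b ∧ ((a, b) ∈ T ∨ (b, a) ∈ T)
  symm := ⟨fun _ _ h => ⟨h.1.symm, h.2.symm⟩⟩
  loopless := ⟨fun _ h => h.1 rfl⟩

/-- `T` is a support tree of the network with arc set `A`: a spanning tree of `A`
(on the whole vertex set) whose leaves are exactly the leaves of `A`. -/
def IsSupportTree {V : Type} [Fintype V] [DecidableEq V]
    (A T : Finset (V × V)) : Prop :=
  T ⊆ A ∧ (toSimpleGraph T).IsTree ∧ ∀ v : V, (IsLeaf A v ↔ IsLeaf T v)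

/-!
Deleting the arcs `(a i, b i)` removes exactly one incoming arc at each reticulation `b i` and
none elsewhere, so every vertex other than the root keeps exactly one parent. An acyclic digraph
in which every non-root vertex has exactly one parent underlies a tree: it is connected through
the parents and has `|V| - 1` arcs, no two of which join the same pair of vertices. No leaf is
created either, because each `a i` keeps one of its two outgoing arcs and all other out-degrees
are unchanged.
-/

variable {V : Type}

theorem Finset.filter_sdiff_distrib {α : Type} [DecidableEq α] (s t : Finset α) (p : α → Prop)
    [DecidablePred p] : (s \ t).filter p = s.filter p \ t.filter p := by
  ext
  simp only [Finset.mem_filter, Finset.mem_sdiff]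
  tauto

theorem Acyclic.mono {A T : Finset (V × V)} (hTA : T ⊆ A) (hA : Acyclic A) : Acyclic T :=
  fun v hv => hA v (Relation.TransGen.mono (fun _ _ h => hTA h) _ _ hv)

theorem Acyclic.wellFounded [Finite V] {T : Finset (V × V)} (hT : Acyclic T) :
    WellFounded (Adj T) :=
  have : IsTrans V (Relation.TransGen (Adj T)) := ⟨fun _ _ _ => .trans⟩
  have : Std.Irrefl (Relation.TransGen (Adj T)) := ⟨hT⟩
  Subrelation.wf Relation.TransGen.single (Finite.wellFounded_of_trans_of_irrefl _)

theorem Acyclic.ne_of_mem {T : Finset (V × V)} (hT : Acyclic T) {x y : V} (h : (x, y) ∈ T) :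
    x ≠ y := by
  rintro rfl
  exact hT x (.single h)

theorem Acyclic.not_mem_swap {T : Finset (V × V)} (hT : Acyclic T) {x y : V} (h : (x, y) ∈ T) :
    (y, x) ∉ T :=
  fun h' => hT x (.tail (.single h) h')

theorem edgeSet_toSimpleGraph {T : Finset (V × V)} (hT : Acyclic T) :
    (toSimpleGraph T).edgeSet = (fun e : V × V => s(e.1, e.2)) '' T := by
  ext z
  induction z using Sym2.ind with
  | _ x y =>
    simp only [SimpleGraph.mem_edgeSet, toSimpleGraph, Set.mem_image, Finset.mem_coe,
      Prod.exists, Sym2.eq_iff]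
    constructor
    · rintro ⟨-, hxy | hyx⟩
      · exact ⟨x, y, hxy, .inl ⟨rfl, rfl⟩⟩
      · exact ⟨y, x, hyx, .inr ⟨rfl, rfl⟩⟩
    · rintro ⟨p, q, hpq, ⟨rfl, rfl⟩ | ⟨rfl, rfl⟩⟩
      · exact ⟨hT.ne_of_mem hpq, .inl hpq⟩
      · exact ⟨(hT.ne_of_mem hpq).symm, .inr hpq⟩

theorem ncard_edgeSet_toSimpleGraph {T : Finset (V × V)} (hT : Acyclic T) :
    (toSimpleGraph T).edgeSet.ncard = T.card := by
  have hinj : Set.InjOn (fun e : V × V => s(e.1, e.2)) T := by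
    rintro ⟨x, y⟩ hxy ⟨p, q⟩ hpq h
    rcases Sym2.eq_iff.mp h with ⟨rfl, rfl⟩ | ⟨rfl, rfl⟩
    · rfl
    · exact absurd hpq (hT.not_mem_swap hxy)
  rw [edgeSet_toSimpleGraph hT, hinj.ncard_image, Set.ncard_coe_finset]

section

variable [DecidableEq V]

theorem exists_mem_of_inDeg_pos {T : Finset (V × V)} {v : V} (h : 0 < inDeg T v) :
    ∃ p, (p, v) ∈ T := by
  obtain ⟨⟨p, w⟩, he⟩ := Finset.card_pos.mp h
  rw [Finset.mem_filter] at he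
  exact ⟨p, he.2 ▸ he.1⟩

theorem inDeg_sdiff {A R : Finset (V × V)} (hRA : R ⊆ A) (v : V) :
    inDeg (A \ R) v = inDeg A v - inDeg R v := by
  rw [inDeg, inDeg, inDeg, Finset.filter_sdiff_distrib,
    Finset.card_sdiff_of_subset (Finset.filter_subset_filter _ hRA)]

theorem outDeg_sdiff {A R : Finset (V × V)} (hRA : R ⊆ A) (v : V) :
    outDeg (A \ R) v = outDeg A v - outDeg R v := by
  rw [outDeg, outDeg, outDeg, Finset.filter_sdiff_distrib,
    Finset.card_sdiff_of_subset (Finset.filter_subset_filter _ hRA)]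

variable {ι : Type} [Fintype ι]

def reticulationArcs (a b : ι → V) : Finset (V × V) :=
  Finset.univ.image fun i => (a i, b i)

theorem reticulationArcs_subset {A : Finset (V × V)} {a b : ι → V}
    (hab : ∀ i, (a i, b i) ∈ A) : reticulationArcs a b ⊆ A := by
  simpa [reticulationArcs, Finset.image_subset_iff] using hab

theorem inDeg_reticulationArcs_apply (a : ι → V) {b : ι → V} (hb : b.Injective) (i : ι) :
    inDeg (reticulationArcs a b) (b i) = 1 := by
  rw [inDeg, reticulationArcs, Finset.filter_image, Finset.card_eq_one]
  refine ⟨(a i, b i), ?_⟩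
  simp [Finset.eq_singleton_iff_unique_mem, hb.eq_iff]

theorem inDeg_reticulationArcs_eq_zero (a : ι → V) {b : ι → V} {v : V}
    (hv : ∀ i, b i ≠ v) :
    inDeg (reticulationArcs a b) v = 0 := by
  simp [inDeg, reticulationArcs, hv]

theorem outDeg_reticulationArcs_apply {a : ι → V} (ha : a.Injective) (b : ι → V) (i : ι) :
    outDeg (reticulationArcs a b) (a i) = 1 := by
  rw [outDeg, reticulationArcs, Finset.filter_image, Finset.card_eq_one]
  refine ⟨(a i, b i), ?_⟩
  simp [Finset.eq_singleton_iff_unique_mem, ha.eq_iff]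

theorem outDeg_reticulationArcs_eq_zero {a : ι → V} (b : ι → V) {v : V}
    (hv : ∀ i, a i ≠ v) :
    outDeg (reticulationArcs a b) v = 0 := by
  simp [outDeg, reticulationArcs, hv]

theorem isLeaf_sdiff_reticulationArcs_iff {A : Finset (V × V)} {a b : ι → V}
    (ha : a.Injective) (hout_a : ∀ i, outDeg A (a i) = 2) (hout_b : ∀ i, outDeg A (b i) = 1)
    (hab : ∀ i, (a i, b i) ∈ A) (v : V) :
    IsLeaf (A \ reticulationArcs a b) v ↔ IsLeaf A v := by
  have hRA := reticulationArcs_subset hab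
  by_cases hva : ∃ i, a i = v
  · obtain ⟨i, rfl⟩ := hva
    simp [IsLeaf, outDeg_sdiff hRA, outDeg_reticulationArcs_apply ha, hout_a]
  push Not at hva
  by_cases hvb : ∃ i, b i = v
  · obtain ⟨i, rfl⟩ := hvb
    simp [IsLeaf, outDeg_sdiff hRA, outDeg_reticulationArcs_eq_zero b hva, hout_b]
  push Not at hvb
  simp only [IsLeaf, inDeg_sdiff hRA, outDeg_sdiff hRA, inDeg_reticulationArcs_eq_zero a hvb,
    outDeg_reticulationArcs_eq_zero b hva, Nat.sub_zero]

end

section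

variable [Fintype V] [DecidableEq V]

theorem card_eq_sum_inDeg (T : Finset (V × V)) : T.card = ∑ v, inDeg T v :=
  Finset.card_eq_sum_card_fiberwise fun _ _ => Finset.mem_univ _

theorem reachable_root_of_inDeg_pos {T : Finset (V × V)} (hT : Acyclic T) (ρ : V)
    (h : ∀ v, v ≠ ρ → 0 < inDeg T v) (v : V) : (toSimpleGraph T).Reachable v ρ := by
  induction v using hT.wellFounded.induction with
  | _ v ih =>
    by_cases hv : v = ρ
    · exact hv ▸ .rfl
    obtain ⟨p, hp⟩ := exists_mem_of_inDeg_pos (h v hv)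
    have hadj : (toSimpleGraph T).Adj v p := ⟨(hT.ne_of_mem hp).symm, .inr hp⟩
    exact hadj.reachable.trans (ih p hp)

theorem isTree_toSimpleGraph {T : Finset (V × V)} (hT : Acyclic T) {ρ : V}
    (hρ : inDeg T ρ = 0) (h : ∀ v, v ≠ ρ → inDeg T v = 1) : (toSimpleGraph T).IsTree := by
  have hconn : (toSimpleGraph T).Connected := by
    have := Nonempty.intro ρ
    have hreach := reachable_root_of_inDeg_pos hT ρ fun v hv => (h v hv).symm ▸ Nat.one_pos
    exact ⟨fun x y => (hreach x).trans (hreach y).symm⟩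
  have hcard : T.card + 1 = Fintype.card V := by
    rw [card_eq_sum_inDeg, ← Finset.add_sum_erase _ _ (Finset.mem_univ ρ), hρ,
      Finset.sum_congr rfl fun v hv => h v (Finset.ne_of_mem_erase hv), Finset.sum_const,
      Finset.card_erase_of_mem (Finset.mem_univ ρ), smul_eq_mul, mul_one, Finset.card_univ]
    have := Fintype.card_pos_iff.mpr ⟨ρ⟩
    omega
  rw [SimpleGraph.isTree_iff_connected_and_card, Nat.card_coe_set_eq,
    ncard_edgeSet_toSimpleGraph hT, Nat.card_eq_fintype_card]
  exact ⟨hconn, hcard⟩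

variable {A : Finset (V × V)} {ρ : V} {ι : Type} [Fintype ι] {a b : ι → V}

theorem inDeg_sdiff_reticulationArcs_of_ne_root (hN : IsPhyloNetwork A ρ) (hb : b.Injective)
    (hin_b : ∀ i, inDeg A (b i) = 2)
    (hretAll : ∀ v, inDeg A v = 2 ∧ outDeg A v = 1 → ∃ i, v = b i)
    (hab : ∀ i, (a i, b i) ∈ A) {v : V} (hv : v ≠ ρ) :
    inDeg (A \ reticulationArcs a b) v = 1 := by
  rw [inDeg_sdiff (reticulationArcs_subset hab)]
  by_cases hvb : ∃ i, b i = v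
  · obtain ⟨i, rfl⟩ := hvb
    rw [inDeg_reticulationArcs_apply a hb, hin_b]
  · push Not at hvb
    rw [inDeg_reticulationArcs_eq_zero a hvb, Nat.sub_zero]
    rcases hN.vertex_types v hv with ⟨h, -⟩ | ⟨h, -⟩ | hret
    · exact h
    · exact h
    · obtain ⟨i, rfl⟩ := hretAll v hret
      exact absurd rfl (hvb i)

theorem isSupportTree_sdiff_reticulationArcs (hN : IsPhyloNetwork A ρ) (ha : a.Injective)
    (hb : b.Injective) (hin_b : ∀ i, inDeg A (b i) = 2) (hout_b : ∀ i, outDeg A (b i) = 1)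
    (hout_a : ∀ i, outDeg A (a i) = 2)
    (hretAll : ∀ v, inDeg A v = 2 ∧ outDeg A v = 1 → ∃ i, v = b i)
    (hab : ∀ i, (a i, b i) ∈ A) :
    IsSupportTree A (A \ reticulationArcs a b) := by
  have hroot : inDeg (A \ reticulationArcs a b) ρ = 0 := by
    rw [inDeg_sdiff (reticulationArcs_subset hab), hN.root_in, Nat.zero_sub]
  refine ⟨Finset.sdiff_subset, ?_,
    fun v => (isLeaf_sdiff_reticulationArcs_iff ha hout_a hout_b hab v).symm⟩
  exact isTree_toSimpleGraph (hN.acyclic.mono Finset.sdiff_subset) hroot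
    fun v hv => inDeg_sdiff_reticulationArcs_of_ne_root hN hb hin_b hretAll hab hv

end

theorem stmt7_general {V : Type} [Fintype V] [DecidableEq V]
    (A : Finset (V × V)) (ρ : V) (hN : IsPhyloNetwork A ρ)
    (k : ℕ) (a b : Fin k → V)
    (hainj : Function.Injective a) (hbinj : Function.Injective b)
    (hret : ∀ i : Fin k, inDeg A (b i) = 2 ∧ outDeg A (b i) = 1)
    (htreev : ∀ i : Fin k, inDeg A (a i) = 1 ∧ outDeg A (a i) = 2)
    (hretAll : ∀ v : V, inDeg A v = 2 ∧ outDeg A v = 1 → ∃ i : Fin k, v = b i)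
    -- the reticulation arcs (a i, b i)
    (hab : ∀ i : Fin k, (a i, b i) ∈ A) :
    IsSupportTree A (A \ Finset.image (fun i : Fin k => (a i, b i)) Finset.univ) ∧
      ∃ T : Finset (V × V), IsSupportTree A T := by
  have hT := isSupportTree_sdiff_reticulationArcs hN hainj hbinj (fun i => (hret i).1)
    (fun i => (hret i).2) (fun i => (htreev i).2) hretAll hab
  exact ⟨hT, _, hT⟩

/-- A burl-rooted tree with `k` reticulation vertices `b 0, …, b (k-1)` and corresponding
tree vertices `a 0, …, a (k-1)` is tree-based: deleting the `k` reticulation arcs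
`(a i, b i)` yields a spanning tree whose leaves are exactly the leaves of the network. -/
theorem stmt7 {V : Type} [Fintype V] [DecidableEq V]
    (A : Finset (V × V)) (ρ : V) (hN : IsPhyloNetwork A ρ)
    (k : ℕ) (hk : 0 < k) (a b : Fin k → V) (ℓ₁ u : V)
    (hainj : Function.Injective a) (hbinj : Function.Injective b)
    (hret : ∀ i : Fin k, inDeg A (b i) = 2 ∧ outDeg A (b i) = 1)
    (htreev : ∀ i : Fin k, inDeg A (a i) = 1 ∧ outDeg A (a i) = 2)
    (hretAll : ∀ v : V, inDeg A v = 2 ∧ outDeg A v = 1 → ∃ i : Fin k, v = b i)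
    (hleaf : IsLeaf A ℓ₁)
    -- the path ρ → b 0 → ⋯ → b (k-1) → ℓ₁
    (hρb : (ρ, b ⟨0, hk⟩) ∈ A)
    (hbchain : ∀ i : Fin k, ∀ h : i.1 + 1 < k, (b i, b ⟨i.1 + 1, h⟩) ∈ A)
    (hbl : (b ⟨k - 1, Nat.sub_lt hk Nat.one_pos⟩, ℓ₁) ∈ A)
    -- every directed path from ρ to another leaf begins ρ → a 0 → ⋯ → a (k-1) → u
    (hprefix : ∀ ℓ : V, IsLeaf A ℓ → ℓ ≠ ℓ₁ →
      ∀ (p : List V) (hp : p ≠ []), List.Chain (Adj A) ρ p → p.getLast hp = ℓ →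
        (List.ofFn a ++ [u]) <+: p)
    -- the reticulation arcs (a i, b i)
    (hab : ∀ i : Fin k, (a i, b i) ∈ A) :
    IsSupportTree A (A \ Finset.image (fun i : Fin k => (a i, b i)) Finset.univ) ∧
      ∃ T : Finset (V × V), IsSupportTree A T :=
  stmt7_general A ρ hN k a b hainj hbinj hret htreev hretAll hab
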